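/- arXiv:1812.07746 — 2 statements merged into one kernel-verified Lean document; each statement's English description precedes it below -/
import Mathlib

section
/- Under the recognition setup (conditions (1)–(5)), v_0 is the unique highest weight element of (B, e_a, f_a, ε_a, φ_a, wt): for every v ∈ B with v ≠ v_0 there exists b ∈ I with e_b v ≠ 0. Moreover wt(v) ∈ Q⁻ for every v ∈ B. -/
/-! Abstract crystals for generalized Kac–Moody (Borcherds) algebras. -/

/-- A Borcherds–Cartan matrix: integer matrix with `A a a = 2` or `A a a` nonpositive even,
nonpositive off-diagonal entries, and `A a b = 0 ↔ A b a = 0`. -/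
structure IsBorcherdsCartan {I : Type*} (A : I → I → ℤ) : Prop where
  diag : ∀ a, A a a = 2 ∨ (A a a ≤ 0 ∧ Even (A a a))
  offdiag : ∀ a b, a ≠ b → A a b ≤ 0
  zero_iff : ∀ a b, A a b = 0 ↔ A b a = 0

/-- The data of a crystal structure on a set `B`: partial operators `e`, `f`,
string functions `eps`, `phi` valued in `ℤ ∪ {-∞}`, and a weight function valued in the
root lattice `Q = ⊕_{a ∈ I} ℤ α_a`, modelled as `I →₀ ℤ` (so `α_a = Finsupp.single a 1`). -/
structure CrystalStructure (I B : Type*) where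
  e : I → B → Option B
  f : I → B → Option B
  eps : I → B → WithBot ℤ
  phi : I → B → WithBot ℤ
  wt : B → I →₀ ℤ

variable {I B : Type*}

/-- The pairing `⟨h_a, μ⟩` determined by `⟨h_a, α_b⟩ = A a b`. -/
def pairing (A : I → I → ℤ) (a : I) (μ : I →₀ ℤ) : ℤ :=
  μ.sum fun b m => A a b * m

/-- The axioms of an abstract `U_q(g)`-crystal for a Borcherds–Cartan matrix `A`. -/
def IsAbstractCrystal (A : I → I → ℤ) (C : CrystalStructure I B) : Prop :=
  (∀ a v w, C.e a v = some w → C.wt w = C.wt v + Finsupp.single a 1) ∧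
  (∀ a v w, C.f a v = some w → C.wt w = C.wt v - Finsupp.single a 1) ∧
  (∀ a v, C.phi a v = C.eps a v + ((pairing A a (C.wt v) : ℤ) : WithBot ℤ)) ∧
  (∀ a v w, C.f a v = some w ↔ C.e a w = some v) ∧
  (∀ a v w, C.e a v = some w →
    (A a a = 2 → C.eps a w + 1 = C.eps a v ∧ C.phi a w = C.phi a v + 1) ∧
    (A a a ≤ 0 → C.eps a w = C.eps a v ∧ C.phi a w = C.phi a v + ((A a a : ℤ) : WithBot ℤ))) ∧
  (∀ a v w, C.f a v = some w →
    (A a a = 2 → C.eps a w = C.eps a v + 1 ∧ C.phi a w + 1 = C.phi a v) ∧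
    (A a a ≤ 0 → C.eps a w = C.eps a v ∧ C.phi a w + ((A a a : ℤ) : WithBot ℤ) = C.phi a v)) ∧
  (∀ a v, C.phi a v = ⊥ → C.e a v = none ∧ C.f a v = none)

/-- One step in the crystal graph. -/
def CrystalStep (C : CrystalStructure I B) (v w : B) : Prop :=
  ∃ a, C.e a v = some w ∨ C.f a v = some w

/-- A crystal is connected if any two elements are joined by a chain of crystal operators. -/
def CrystalConnected (C : CrystalStructure I B) : Prop :=
  ∀ v w, Relation.ReflTransGen (CrystalStep C) v w

/-- Iteration of a partial map. -/
def iterOpt {α : Type*} (g : α → Option α) : ℕ → α → Option α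
  | 0, v => some v
  | k + 1, v => (iterOpt g k v).bind g

/-- `κ_a(v)`, defined from the two crystal structures via the maximal numbers of times
the operators `e_a` resp. `e_a^⋆` can be applied (`te`, `teS`). -/
def kappaFun (A : I → I → ℤ) (C : CrystalStructure I B) (te teS : I → B → ℕ) (a : I) (v : B) : ℤ :=
  if A a a = 2 then (te a v : ℤ) + (teS a v : ℤ) + pairing A a (C.wt v)
  else 0 + (teS a v : ℤ) * A a a + pairing A a (C.wt v)

-- auxiliary block to splice in
section RecognitionAux

theorem iterOpt_succ_left {α : Type*} (g : α → Option α) :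
    ∀ (k : ℕ) {v u : α}, g v = some u → iterOpt g (k + 1) v = iterOpt g k u := by
  intro k
  induction k with
  | zero => intro v u h; simp [iterOpt, h]
  | succ k ih =>
    intro v u h
    show (iterOpt g (k + 1) v).bind g = (iterOpt g k u).bind g
    rw [ih h]

theorem iterOpt_none_mono {α : Type*} (g : α → Option α) :
    ∀ (m k : ℕ), k ≤ m → ∀ v : α, iterOpt g k v = none → iterOpt g m v = none := by
  intro m
  induction m with
  | zero =>
    intro k h v hv
    obtain rfl : k = 0 := Nat.le_zero.mp h
    exact hv
  | succ m ih =>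
    intro k h v hv
    by_cases hk : k ≤ m
    · have h2 := ih k hk v hv
      show (iterOpt g m v).bind g = none
      rw [h2]; rfl
    · obtain rfl : k = m + 1 := by omega
      exact hv

theorem countOf_unique {α : Type*} (g : α → Option α) {v : α} {n m : ℕ}
    (hn1 : iterOpt g n v ≠ none) (hn2 : iterOpt g (n + 1) v = none)
    (hm1 : iterOpt g m v ≠ none) (hm2 : iterOpt g (m + 1) v = none) : n = m := by
  rcases lt_trichotomy n m with h | h | h
  · exact absurd (iterOpt_none_mono g m (n + 1) h v hn2) hm1
  · exact h
  · exact absurd (iterOpt_none_mono g n (m + 1) h v hm2) hn1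

theorem countOf_succ {α : Type*} (g : α → Option α) (t : α → ℕ)
    (ht : ∀ v, iterOpt g (t v) v ≠ none ∧ iterOpt g (t v + 1) v = none)
    {v u : α} (h : g v = some u) : t v = t u + 1 := by
  refine countOf_unique g (ht v).1 (ht v).2 ?_ ?_
  · rw [iterOpt_succ_left g (t u) h]; exact (ht u).1
  · rw [show t u + 1 + 1 = (t u + 1) + 1 from rfl, iterOpt_succ_left g (t u + 1) h]
    exact (ht u).2

theorem countOf_zero {α : Type*} (g : α → Option α) (t : α → ℕ)
    (ht : ∀ v, iterOpt g (t v) v ≠ none ∧ iterOpt g (t v + 1) v = none)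
    {v : α} (h : g v = none) : t v = 0 := by
  by_contra hne
  have h1 : iterOpt g 1 v = none := by simp [iterOpt, h]
  exact (ht v).1 (iterOpt_none_mono g (t v) 1 (Nat.one_le_iff_ne_zero.mpr hne) v h1)

theorem countOf_pos {α : Type*} (g : α → Option α) (t : α → ℕ)
    (ht : ∀ v, iterOpt g (t v) v ≠ none ∧ iterOpt g (t v + 1) v = none)
    {v : α} (h : 0 < t v) : ∃ u, g v = some u := by
  cases hg : g v with
  | none => rw [countOf_zero g t ht hg] at h; exact absurd h (lt_irrefl 0)
  | some u => exact ⟨u, rfl⟩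

theorem pairing_add {I : Type*} (A : I → I → ℤ) (a : I) (μ ν : I →₀ ℤ) :
    pairing A a (μ + ν) = pairing A a μ + pairing A a ν :=
  Finsupp.sum_add_index' (fun b => mul_zero _) (fun b m n => mul_add _ _ _)

theorem pairing_single {I : Type*} (A : I → I → ℤ) (a b : I) (c : ℤ) :
    pairing A a (Finsupp.single b c) = A a b * c :=
  Finsupp.sum_single_index (mul_zero _)

theorem pairing_zero {I : Type*} (A : I → I → ℤ) (a : I) : pairing A a 0 = 0 :=
  Finsupp.sum_zero_index

theorem pairing_sub_single {I : Type*} (A : I → I → ℤ) (a b : I) (μ : I →₀ ℤ) :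
    pairing A a (μ - Finsupp.single b 1) = pairing A a μ - A a b := by
  have h := pairing_add A a (μ - Finsupp.single b 1) (Finsupp.single b 1)
  rw [sub_add_cancel, pairing_single] at h
  linarith

/-- Elements reachable from `v0` by applying lowering operators of `C`. -/
inductive GenF {I B : Type*} (C : CrystalStructure I B) (v0 : B) : B → Prop
  | base : GenF C v0 v0
  | step {w v : B} (a : I) : GenF C v0 w → C.f a w = some v → GenF C v0 v

end RecognitionAux
/-- Under the recognition setup, `v₀` is the unique highest weight element of
`(B, e, f, ε, φ, wt)`: every `v ≠ v₀` admits some `b` with `e_b v ≠ 0`; moreover every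
weight lies in `Q⁻`. -/
theorem recognition_unique_highest_weight
    {I B : Type*} (A : I → I → ℤ) (hA : IsBorcherdsCartan A)
    (C S : CrystalStructure I B)
    (hC : IsAbstractCrystal A C) (hS : IsAbstractCrystal A S)
    (hwt : S.wt = C.wt)
    (hconnC : CrystalConnected C) (hconnS : CrystalConnected S)
    (v0 : B)
    (hv0C : ∀ a, C.e a v0 = none) (hv0S : ∀ a, S.e a v0 = none)
    (hwt0 : C.wt v0 = 0) (huniq : ∀ v, C.wt v = 0 → v = v0)
    (te teS : I → B → ℕ)
    (hte : ∀ a v, iterOpt (C.e a) (te a v) v ≠ none ∧ iterOpt (C.e a) (te a v + 1) v = none)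
    (hteS : ∀ a v, iterOpt (S.e a) (teS a v) v ≠ none ∧ iterOpt (S.e a) (teS a v + 1) v = none)
    (heps : ∀ a v, (A a a = 2 → C.eps a v = ((te a v : ℤ) : WithBot ℤ)) ∧
      (A a a ≤ 0 → C.eps a v = 0))
    (hepsS : ∀ a v, (A a a = 2 → S.eps a v = ((teS a v : ℤ) : WithBot ℤ)) ∧
      (A a a ≤ 0 → S.eps a v = 0))
    (h1 : ∀ a v, C.f a v ≠ none ∧ S.f a v ≠ none)
    (h2 : ∀ a b, a ≠ b → ∀ v, (C.f b v).bind (S.f a) = (S.f a v).bind (C.f b)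
      ∧ (∀ w, C.f b v = some w → teS a w = teS a v)
      ∧ (∀ w, S.f a v = some w → te b w = te b v))
    (h3 : ∀ a v, kappaFun A C te teS a v = 0 → C.f a v = S.f a v)
    (h4 : ∀ a v, A a a = 2 → 0 ≤ kappaFun A C te teS a v
      ∧ (1 ≤ kappaFun A C te teS a v →
          (∀ w, C.f a v = some w → S.eps a w = S.eps a v) ∧
          (∀ w, S.f a v = some w → C.eps a w = C.eps a v))
      ∧ (2 ≤ kappaFun A C te teS a v → (C.f a v).bind (S.f a) = (S.f a v).bind (C.f a)))
    (h5 : ∀ a v, A a a ≤ 0 → 0 < kappaFun A C te teS a v →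
      (∀ w, C.f a v = some w → teS a w = teS a v) ∧
      (C.f a v).bind (S.f a) = (S.f a v).bind (C.f a)) :
    (∀ v : B, v ≠ v0 → ∃ b, C.e b v ≠ none) ∧ (∀ (v : B) (b : I), C.wt v b ≤ 0) := by
  classical
  obtain ⟨-, hCwt_f, -, hCef, -, -, -⟩ := hC
  obtain ⟨-, hSwt_f0, -, hSef, -, -, -⟩ := hS
  have hSwt_f : ∀ (a : I) (v w : B), S.f a v = some w →
      C.wt w = C.wt v - Finsupp.single a 1 := by
    intro a v w h
    have h2 := hSwt_f0 a v w h
    rwa [hwt] at h2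
  have teC_f : ∀ (a : I) {x y : B}, C.f a x = some y → te a y = te a x + 1 := by
    intro a x y h
    exact countOf_succ (C.e a) (te a) (hte a) ((hCef a x y).1 h)
  have teS_f : ∀ (a : I) {x y : B}, S.f a x = some y → teS a y = teS a x + 1 := by
    intro a x y h
    exact countOf_succ (S.e a) (teS a) (hteS a) ((hSef a x y).1 h)
  have teS_e : ∀ (a : I) {x y : B}, S.e a x = some y → teS a x = teS a y + 1 := by
    intro a x y h
    exact countOf_succ (S.e a) (teS a) (hteS a) h
  have teS_pos : ∀ (a : I) {x : B}, 0 < teS a x → ∃ u, S.e a x = some u := by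
    intro a x h
    exact countOf_pos (S.e a) (teS a) (hteS a) h
  have teC0 : ∀ a : I, te a v0 = 0 := fun a => countOf_zero (C.e a) (te a) (hte a) (hv0C a)
  have teS0 : ∀ a : I, teS a v0 = 0 := fun a => countOf_zero (S.e a) (teS a) (hteS a) (hv0S a)
  have fS_inj : ∀ (a : I) {x y v : B}, S.f a x = some v → S.f a y = some v → x = y := by
    intro a x y v hx hy
    have hx' := (hSef a x v).1 hx
    have hy' := (hSef a y v).1 hy
    rw [hx'] at hy'
    exact Option.some.inj hy'
  have teS_epsS : ∀ (a : I), A a a = 2 → ∀ {x y : B}, S.eps a x = S.eps a y →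
      teS a x = teS a y := by
    intro a h2 x y h
    rw [(hepsS a x).1 h2, (hepsS a y).1 h2] at h
    exact_mod_cast h
  have teC_epsC : ∀ (a : I), A a a = 2 → ∀ {x y : B}, C.eps a x = C.eps a y →
      te a x = te a y := by
    intro a h2 x y h
    rw [(heps a x).1 h2, (heps a y).1 h2] at h
    exact_mod_cast h
  have kR : ∀ (a : I) (v : B), A a a = 2 →
      kappaFun A C te teS a v = (te a v : ℤ) + (teS a v : ℤ) + pairing A a (C.wt v) := by
    intro a v h; simp [kappaFun, h]
  have kI : ∀ (a : I) (v : B), ¬ A a a = 2 →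
      kappaFun A C te teS a v = (teS a v : ℤ) * A a a + pairing A a (C.wt v) := by
    intro a v h; simp [kappaFun, h]
  have imA : ∀ a : I, ¬ A a a = 2 → A a a ≤ 0 := by
    intro a h
    rcases hA.diag a with h2 | h2
    · exact absurd h2 h
    · exact h2.1
  have pC_f : ∀ (a b : I) {x y : B}, C.f b x = some y →
      pairing A a (C.wt y) = pairing A a (C.wt x) - A a b := by
    intro a b x y h; rw [hCwt_f b x y h, pairing_sub_single]
  have pS_f : ∀ (a b : I) {x y : B}, S.f b x = some y →
      pairing A a (C.wt y) = pairing A a (C.wt x) - A a b := by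
    intro a b x y h; rw [hSwt_f b x y h, pairing_sub_single]
  have fC_some : ∀ (a : I) (x : B), ∃ y, C.f a x = some y := by
    intro a x; exact Option.ne_none_iff_exists'.mp (h1 a x).1
  have fS_some : ∀ (a : I) (x : B), ∃ y, S.f a x = some y := by
    intro a x; exact Option.ne_none_iff_exists'.mp (h1 a x).2
  -- κ ≥ 0 on GenF for imaginary indices
  have lemK : ∀ v : B, GenF C v0 v → ∀ a : I, ¬ A a a = 2 → 0 ≤ kappaFun A C te teS a v := by
    intro v hv
    induction hv with
    | base =>
      intro a ha
      rw [kI a v0 ha, teS0 a, hwt0, pairing_zero]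
      simp
    | @step w v' b hwF hfb ih =>
      intro a ha
      by_cases hab : a = b
      · subst hab
        have hk := ih a ha
        rcases lt_or_eq_of_le hk with hpos | heq0
        · have hts := (h5 a w (imA a ha) hpos).1 v' hfb
          rw [kI a v' ha, hts, pC_f a a hfb]
          rw [kI a w ha] at hpos
          have hA0 := imA a ha
          linarith
        · have hkw : kappaFun A C te teS a w = 0 := heq0.symm
          have hfw := h3 a w hkw
          have hSfb : S.f a w = some v' := by rw [← hfw]; exact hfb
          have hts : teS a v' = teS a w + 1 := teS_f a hSfb
          rw [kI a v' ha, hts, pC_f a a hfb]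
          rw [kI a w ha] at hkw
          have hcast : ((teS a w + 1 : ℕ) : ℤ) * A a a = (teS a w : ℤ) * A a a + A a a := by
            push_cast; ring
          linarith
      · have hts := (h2 a b hab w).2.1 v' hfb
        rw [kI a v' ha, hts, pC_f a b hfb]
        have hiw := ih a ha
        rw [kI a w ha] at hiw
        have hoff := hA.offdiag a b hab
        linarith
  -- GenF is closed under the starred lowering operators
  have lemFstar : ∀ v : B, GenF C v0 v → ∀ (a : I) (x : B), S.f a v = some x →
      GenF C v0 x := by
    intro v hv
    induction hv with
    | base =>
      intro a x hx
      have hk : kappaFun A C te teS a v0 = 0 := by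
        by_cases h2a : A a a = 2
        · rw [kR a v0 h2a, teC0 a, teS0 a, hwt0, pairing_zero]; simp
        · rw [kI a v0 h2a, teS0 a, hwt0, pairing_zero]; simp
      exact GenF.step a GenF.base (by rw [h3 a v0 hk]; exact hx)
    | @step w v' b hwF hfb ih =>
      intro a x hx
      have hv'F : GenF C v0 v' := GenF.step b hwF hfb
      by_cases hab : a = b
      · subst hab
        by_cases h2a : A a a = 2
        · have hk0 := (h4 a w h2a).1
          by_cases hk2 : 2 ≤ kappaFun A C te teS a w
          · have hcomm := (h4 a w h2a).2.2 hk2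
            obtain ⟨y, hy⟩ := fS_some a w
            obtain ⟨z, hz⟩ := fC_some a y
            rw [hfb, hy] at hcomm
            simp only [Option.bind_some] at hcomm
            have hxz : S.f a v' = some z := by rw [hcomm, hz]
            rw [hx] at hxz
            injection hxz with hxz
            subst hxz
            exact GenF.step a (ih a y hy) hz
          · have hkv' : kappaFun A C te teS a v' = 0 := by
              have hteCv' : te a v' = te a w + 1 := teC_f a hfb
              by_cases hk1 : 1 ≤ kappaFun A C te teS a w
              · have hkw : kappaFun A C te teS a w = 1 := by omega
                have heq := ((h4 a w h2a).2.1 hk1).1 v' hfb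
                have hts : teS a v' = teS a w := teS_epsS a h2a heq
                rw [kR a v' h2a, hteCv', hts, pC_f a a hfb, h2a]
                rw [kR a w h2a] at hkw
                push_cast
                -- (already in final form)
                linarith
              · have hkw : kappaFun A C te teS a w = 0 := by omega
                have hfw := h3 a w hkw
                have hSfb : S.f a w = some v' := by rw [← hfw]; exact hfb
                have hts : teS a v' = teS a w + 1 := teS_f a hSfb
                rw [kR a v' h2a, hteCv', hts, pC_f a a hfb, h2a]
                rw [kR a w h2a] at hkw
                push_cast
                -- (already in final form)
                linarith
            obtain ⟨z, hz⟩ := fC_some a v'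
            have hxz : S.f a v' = some z := by rw [← h3 a v' hkv']; exact hz
            rw [hx] at hxz
            injection hxz with hxz
            subst hxz
            exact GenF.step a hv'F hz
        · have hA0 := imA a h2a
          have hk0 := lemK w hwF a h2a
          rcases lt_or_eq_of_le hk0 with hpos | heq0
          · have hcomm := (h5 a w hA0 hpos).2
            obtain ⟨y, hy⟩ := fS_some a w
            obtain ⟨z, hz⟩ := fC_some a y
            rw [hfb, hy] at hcomm
            simp only [Option.bind_some] at hcomm
            have hxz : S.f a v' = some z := by rw [hcomm, hz]
            rw [hx] at hxz
            injection hxz with hxz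
            subst hxz
            exact GenF.step a (ih a y hy) hz
          · have hkw : kappaFun A C te teS a w = 0 := heq0.symm
            have hfw := h3 a w hkw
            have hSfb : S.f a w = some v' := by rw [← hfw]; exact hfb
            have hts : teS a v' = teS a w + 1 := teS_f a hSfb
            have hkv' : kappaFun A C te teS a v' = 0 := by
              rw [kI a v' h2a, hts, pC_f a a hfb]
              rw [kI a w h2a] at hkw
              have hcast : ((teS a w + 1 : ℕ) : ℤ) * A a a = (teS a w : ℤ) * A a a + A a a := by
                push_cast; ring
              linarith
            obtain ⟨z, hz⟩ := fC_some a v'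
            have hxz : S.f a v' = some z := by rw [← h3 a v' hkv']; exact hz
            rw [hx] at hxz
            injection hxz with hxz
            subst hxz
            exact GenF.step a hv'F hz
      · have hcomm := (h2 a b hab w).1
        obtain ⟨y, hy⟩ := fS_some a w
        obtain ⟨z, hz⟩ := fC_some b y
        rw [hfb, hy] at hcomm
        simp only [Option.bind_some] at hcomm
        have hxz : S.f a v' = some z := by rw [hcomm, hz]
        rw [hx] at hxz
        injection hxz with hxz
        subst hxz
        exact GenF.step b (ih a y hy) hz
  -- GenF is closed under the starred raising operators
  have lemEstar : ∀ v : B, GenF C v0 v → ∀ (a : I) (u : B), S.e a v = some u →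
      GenF C v0 u := by
    intro v hv
    induction hv with
    | base =>
      intro a u hu
      rw [hv0S a] at hu
      exact absurd hu (by simp)
    | @step w v' b hwF hfb ih =>
      intro a u hu
      have hfu : S.f a u = some v' := (hSef a u v').2 hu
      have htv' : teS a v' = teS a u + 1 := teS_e a hu
      by_cases hab : a = b
      · subst hab
        by_cases h2a : A a a = 2
        · have hk0 := (h4 a w h2a).1
          by_cases hk1 : 1 ≤ kappaFun A C te teS a w
          · have hepsSw := ((h4 a w h2a).2.1 hk1).1 v' hfb
            have htsv'w : teS a v' = teS a w := teS_epsS a h2a hepsSw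
            have htw : 0 < teS a w := by omega
            obtain ⟨u'', hu''⟩ := teS_pos a htw
            have hu''F := ih a u'' hu''
            have hfu'' : S.f a u'' = some w := (hSef a u'' w).2 hu''
            have htwu'' : teS a w = teS a u'' + 1 := teS_e a hu''
            have hpw := pS_f a a hfu''
            have hku''1 : 1 ≤ kappaFun A C te teS a u'' := by
              by_contra hlt
              have hk0' : kappaFun A C te teS a u'' = 0 := by
                have := (h4 a u'' h2a).1
                omega
              have hCfu'' : C.f a u'' = some w := by rw [h3 a u'' hk0']; exact hfu''
              have htc : te a w = te a u'' + 1 := teC_f a hCfu''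
              rw [kR a u'' h2a] at hk0'
              rw [kR a w h2a] at hk1
              rw [h2a] at hpw
              have hc1 : (te a w : ℤ) = (te a u'' : ℤ) + 1 := by exact_mod_cast htc
              have hc2 : (teS a w : ℤ) = (teS a u'' : ℤ) + 1 := by exact_mod_cast htwu''
              linarith
            have hteq := ((h4 a u'' h2a).2.1 hku''1).2 w hfu''
            have htcw : te a w = te a u'' := teC_epsC a h2a hteq
            have hku''2 : 2 ≤ kappaFun A C te teS a u'' := by
              rw [kR a u'' h2a]
              rw [kR a w h2a] at hk1
              rw [h2a] at hpw
              have hc1 : (te a w : ℤ) = (te a u'' : ℤ) := by exact_mod_cast htcw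
              have hc2 : (teS a w : ℤ) = (teS a u'' : ℤ) + 1 := by exact_mod_cast htwu''
              linarith
            have hcomm := (h4 a u'' h2a).2.2 hku''2
            obtain ⟨z, hz⟩ := fC_some a u''
            rw [hz, hfu''] at hcomm
            simp only [Option.bind_some] at hcomm
            have hzv : S.f a z = some v' := by rw [hcomm]; exact hfb
            have hzu : z = u := fS_inj a hzv hfu
            subst hzu
            exact GenF.step a hu''F hz
          · have hkw : kappaFun A C te teS a w = 0 := by omega
            have hSfb : S.f a w = some v' := by rw [← h3 a w hkw]; exact hfb
            have hh : S.e a v' = some w := (hSef a w v').1 hSfb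
            rw [hu] at hh
            injection hh with hh
            subst hh
            exact hwF
        · have hA0 := imA a h2a
          have hk0 := lemK w hwF a h2a
          rcases lt_or_eq_of_le hk0 with hpos | heq0
          · have hts := (h5 a w hA0 hpos).1 v' hfb
            have htw : 0 < teS a w := by omega
            obtain ⟨u'', hu''⟩ := teS_pos a htw
            have hu''F := ih a u'' hu''
            have hfu'' : S.f a u'' = some w := (hSef a u'' w).2 hu''
            have htwu'' : teS a w = teS a u'' + 1 := teS_e a hu''
            have hpw := pS_f a a hfu''
            have hku'' : 0 < kappaFun A C te teS a u'' := by
              rw [kI a u'' h2a]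
              rw [kI a w h2a] at hpos
              have hcast : (teS a w : ℤ) = (teS a u'' : ℤ) + 1 := by exact_mod_cast htwu''
              have hm : (teS a u'' : ℤ) * A a a + A a a = (teS a w : ℤ) * A a a := by
                rw [hcast]; ring
              linarith
            have hcomm := (h5 a u'' hA0 hku'').2
            obtain ⟨z, hz⟩ := fC_some a u''
            rw [hz, hfu''] at hcomm
            simp only [Option.bind_some] at hcomm
            have hzv : S.f a z = some v' := by rw [hcomm]; exact hfb
            have hzu : z = u := fS_inj a hzv hfu
            subst hzu
            exact GenF.step a hu''F hz
          · have hkw : kappaFun A C te teS a w = 0 := heq0.symm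
            have hSfb : S.f a w = some v' := by rw [← h3 a w hkw]; exact hfb
            have hh : S.e a v' = some w := (hSef a w v').1 hSfb
            rw [hu] at hh
            injection hh with hh
            subst hh
            exact hwF
      · have hts := (h2 a b hab w).2.1 v' hfb
        have htw : 0 < teS a w := by omega
        obtain ⟨u'', hu''⟩ := teS_pos a htw
        have hu''F := ih a u'' hu''
        have hfu'' : S.f a u'' = some w := (hSef a u'' w).2 hu''
        have hcomm := (h2 a b hab u'').1
        obtain ⟨z, hz⟩ := fC_some b u''
        rw [hz, hfu''] at hcomm
        simp only [Option.bind_some] at hcomm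
        have hzv : S.f a z = some v' := by rw [hcomm]; exact hfb
        have hzu : z = u := fS_inj a hzv hfu
        subst hzu
        exact GenF.step b hu''F hz
  -- every element of B is reachable from v0 by lowering operators of C
  have allF : ∀ v : B, GenF C v0 v := by
    intro v
    have hc := hconnS v0 v
    induction hc with
    | refl => exact GenF.base
    | tail _ hstep ih =>
      obtain ⟨a, h | h⟩ := hstep
      · exact lemEstar _ ih a _ h
      · exact lemFstar _ ih a _ h
  constructor
  · intro v hv
    cases allF v with
    | base => exact absurd rfl hv
    | step b hw hf =>
      refine ⟨b, ?_⟩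
      rw [(hCef b _ v).1 hf]
      simp
  · intro v b
    have h := allF v
    induction h with
    | base => rw [hwt0]; simp
    | step a hw hf ih =>
      rw [hCwt_f a _ _ hf]
      rw [Finsupp.sub_apply, Finsupp.single_apply]
      by_cases hab : a = b
      · simp [hab]; omega
      · simp [hab]; omega
end

section
/- Under the recognition setup (conditions (1)–(5)), for all a ≠ b in I and all v ∈ B: e_a^⋆ v ≠ 0 if and only if e_a^⋆ f_b v ≠ 0, and whenever e_a^⋆ v ≠ 0 one has f_b e_a^⋆ v = e_a^⋆ f_b v. -/
variable {I B : Type*}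

/-! Applying `e_a^⋆` to `v` is possible exactly when the `a`-string length `teS a v` is positive,
and `f_b` preserves that length; the commutation follows by transporting `f_a^⋆ f_b = f_b f_a^⋆`
through the fact that `e_a^⋆` is the partial inverse of `f_a^⋆`. -/

section PartialMaps

variable {α : Type*}

theorem iterOpt_succ' (g : α → Option α) (k : ℕ) (v : α) :
    iterOpt g (k + 1) v = (g v).bind (iterOpt g k) := by
  induction k generalizing v with
  | zero => simp [iterOpt]
  | succ k ih =>
    show (iterOpt g (k + 1) v).bind g = _
    rw [ih, Option.bind_assoc]
    rfl

theorem ne_none_iff_pos_of_iterOpt {g : α → Option α} {v : α} {n : ℕ}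
    (hn : iterOpt g n v ≠ none) (hn1 : iterOpt g (n + 1) v = none) : g v ≠ none ↔ 0 < n := by
  cases n with
  | zero => simpa [iterOpt] using hn1
  | succ k =>
    refine iff_of_true (fun hv => hn ?_) k.succ_pos
    rw [iterOpt_succ', hv, Option.bind_none]

theorem bind_comm_of_partialInv {e f g : α → Option α}
    (hfe : ∀ v w, f v = some w ↔ e w = some v) (hg : ∀ v, g v ≠ none)
    (hcomm : ∀ v, (g v).bind f = (f v).bind g) {v u : α} (hu : e v = some u) :
    (e v).bind g = (g v).bind e := by
  obtain ⟨u', hu'⟩ := Option.ne_none_iff_exists'.mp (hg u)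
  obtain ⟨w, hw⟩ := Option.ne_none_iff_exists'.mp (hg v)
  have hfu' : f u' = some w := by
    simpa [hu', (hfe u v).mpr hu, hw] using hcomm u
  rw [hu, hw, Option.bind_some, Option.bind_some, hu', (hfe u' w).mp hfu']

end PartialMaps

theorem recognition_estar_f_commute_general
    {I B : Type*} (A : I → I → ℤ)
    (C S : CrystalStructure I B)
    (hS : IsAbstractCrystal A S)
    (te teS : I → B → ℕ)
    (hteS : ∀ a v, iterOpt (S.e a) (teS a v) v ≠ none ∧ iterOpt (S.e a) (teS a v + 1) v = none)
    (h1 : ∀ a v, C.f a v ≠ none ∧ S.f a v ≠ none)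
    (h2 : ∀ a b, a ≠ b → ∀ v, (C.f b v).bind (S.f a) = (S.f a v).bind (C.f b)
      ∧ (∀ w, C.f b v = some w → teS a w = teS a v)
      ∧ (∀ w, S.f a v = some w → te b w = te b v)) :
    ∀ a b, a ≠ b → ∀ v : B,
      (S.e a v ≠ none ↔ (C.f b v).bind (S.e a) ≠ none) ∧
      (S.e a v ≠ none → (S.e a v).bind (C.f b) = (C.f b v).bind (S.e a)) := by
  intro a b hab v
  have hestar (u : B) : S.e a u ≠ none ↔ 0 < teS a u :=
    ne_none_iff_pos_of_iterOpt (hteS a u).1 (hteS a u).2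
  obtain ⟨w, hw⟩ := Option.ne_none_iff_exists'.mp (h1 b v).1
  refine ⟨?_, fun hne => ?_⟩
  · rw [hw, Option.bind_some, hestar, hestar, (h2 a b hab v).2.1 w hw]
  · obtain ⟨u, hu⟩ := Option.ne_none_iff_exists'.mp hne
    exact bind_comm_of_partialInv (hS.2.2.2.1 a) (fun u => (h1 b u).1)
      (fun u => (h2 a b hab u).1) hu

/-- Under the recognition setup, for `a ≠ b`: `e_a^⋆ v ≠ 0` iff `e_a^⋆ f_b v ≠ 0`, and
whenever `e_a^⋆ v ≠ 0` one has `f_b e_a^⋆ v = e_a^⋆ f_b v`. -/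
theorem recognition_estar_f_commute
    {I B : Type*} (A : I → I → ℤ) (hA : IsBorcherdsCartan A)
    (C S : CrystalStructure I B)
    (hC : IsAbstractCrystal A C) (hS : IsAbstractCrystal A S)
    (hwt : S.wt = C.wt)
    (hconnC : CrystalConnected C) (hconnS : CrystalConnected S)
    (v0 : B)
    (hv0C : ∀ a, C.e a v0 = none) (hv0S : ∀ a, S.e a v0 = none)
    (hwt0 : C.wt v0 = 0) (huniq : ∀ v, C.wt v = 0 → v = v0)
    (te teS : I → B → ℕ)
    (hte : ∀ a v, iterOpt (C.e a) (te a v) v ≠ none ∧ iterOpt (C.e a) (te a v + 1) v = none)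
    (hteS : ∀ a v, iterOpt (S.e a) (teS a v) v ≠ none ∧ iterOpt (S.e a) (teS a v + 1) v = none)
    (heps : ∀ a v, (A a a = 2 → C.eps a v = ((te a v : ℤ) : WithBot ℤ)) ∧
      (A a a ≤ 0 → C.eps a v = 0))
    (hepsS : ∀ a v, (A a a = 2 → S.eps a v = ((teS a v : ℤ) : WithBot ℤ)) ∧
      (A a a ≤ 0 → S.eps a v = 0))
    (h1 : ∀ a v, C.f a v ≠ none ∧ S.f a v ≠ none)
    (h2 : ∀ a b, a ≠ b → ∀ v, (C.f b v).bind (S.f a) = (S.f a v).bind (C.f b)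
      ∧ (∀ w, C.f b v = some w → teS a w = teS a v)
      ∧ (∀ w, S.f a v = some w → te b w = te b v))
    (h3 : ∀ a v, kappaFun A C te teS a v = 0 → C.f a v = S.f a v)
    (h4 : ∀ a v, A a a = 2 → 0 ≤ kappaFun A C te teS a v
      ∧ (1 ≤ kappaFun A C te teS a v →
          (∀ w, C.f a v = some w → S.eps a w = S.eps a v) ∧
          (∀ w, S.f a v = some w → C.eps a w = C.eps a v))
      ∧ (2 ≤ kappaFun A C te teS a v → (C.f a v).bind (S.f a) = (S.f a v).bind (C.f a)))
    (h5 : ∀ a v, A a a ≤ 0 → 0 < kappaFun A C te teS a v →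
      (∀ w, C.f a v = some w → teS a w = teS a v) ∧
      (C.f a v).bind (S.f a) = (S.f a v).bind (C.f a)) :
    ∀ a b, a ≠ b → ∀ v : B,
      (S.e a v ≠ none ↔ (C.f b v).bind (S.e a) ≠ none) ∧
      (S.e a v ≠ none → (S.e a v).bind (C.f b) = (C.f b v).bind (S.e a)) :=
  recognition_estar_f_commute_general A C S hS te teS hteS h1 h2
end
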